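/- arXiv:1601.06599 — 7 statements merged into one kernel-verified Lean document; each statement's English description precedes it below -/
import Mathlib

section
/- For all m, n ≥ 2, the size Ramsey number of two complete graphs satisfies r̂(K_m, K_n) = C(r(K_m,K_n), 2), where r(K_m,K_n) is the Ramsey number; that is, the trivial upper bound r̂(G,H) ≤ C(r(G,H),2) is attained with equality when G and H are complete graphs. -/
open SimpleGraph

/-- `H` contains a copy of `G`, i.e. there is an injective graph homomorphism `G →g H`. -/
def ContainsCopy {α β : Type*} (G : SimpleGraph α) (H : SimpleGraph β) : Prop :=
  ∃ f : G →g H, Function.Injective f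

/-- `F ⟶ (G, H)` : for every red-blue colouring of the edges of `F` (encoded by the red
subgraph `R ≤ F`, the blue edges being `F \ R`) there is a red copy of `G` or a blue copy
of `H`. -/
def Arrows {γ α β : Type*} (F : SimpleGraph γ) (G : SimpleGraph α) (H : SimpleGraph β) : Prop :=
  ∀ R : SimpleGraph γ, R ≤ F → ContainsCopy G R ∨ ContainsCopy H (F \ R)

/-- The Ramsey number `r(G, H)` : the least `n` such that `K_n ⟶ (G, H)`. -/
noncomputable def ramseyNumber {α β : Type*} (G : SimpleGraph α) (H : SimpleGraph β) : ℕ :=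
  sInf {n : ℕ | Arrows (⊤ : SimpleGraph (Fin n)) G H}

/-- The size Ramsey number `r̂(G, H)` : the least number of edges of a graph `F` with
`F ⟶ (G, H)`. -/
noncomputable def sizeRamsey {α β : Type*} (G : SimpleGraph α) (H : SimpleGraph β) : ℕ :=
  sInf {m : ℕ | ∃ (N : ℕ) (F : SimpleGraph (Fin N)), Arrows F G H ∧ F.edgeSet.ncard = m}

/-- The restricted size Ramsey number `r̂*(G, H)` : the least number of edges of a graph `F`
on exactly `r(G, H)` vertices with `F ⟶ (G, H)`. -/
noncomputable def restrictedSizeRamsey {α β : Type*} (G : SimpleGraph α) (H : SimpleGraph β) : ℕ :=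
  sInf {m : ℕ | ∃ F : SimpleGraph (Fin (ramseyNumber G H)),
    Arrows F G H ∧ F.edgeSet.ncard = m}

/-- The star `K_{1,k}` with `k` edges. -/
def starGraph (k : ℕ) : SimpleGraph (Fin 1 ⊕ Fin k) := completeBipartiteGraph (Fin 1) (Fin k)

/-! Let `r = r(K_m, K_n)`. If `F ⟶ (K_m, K_n)` and `c : F → K_k` is a proper colouring, then
pulling any red-blue colouring of `K_k` back along `c` shows `K_k ⟶ (K_m, K_n)`, so `F` is not
`(r - 1)`-colourable. In a colouring with the least possible number `χ` of colours every two
colour classes are joined by an edge (otherwise they could be merged), so a graph of chromatic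
number `χ` has at least `C(χ, 2)` edges. Hence every graph arrowing `(K_m, K_n)` has at least
`C(r, 2)` edges, and `K_r` has exactly that many. -/

namespace SimpleGraph

variable {V : Type*} {G : SimpleGraph V}

lemma Coloring.exists_adj_of_not_colorable {c : ℕ} (C : G.Coloring (Fin (c + 1)))
    (hG : ¬ G.Colorable c) {i j : Fin (c + 1)} (hij : i ≠ j) :
    ∃ u v, G.Adj u v ∧ C u = i ∧ C v = j := by
  by_contra! h
  refine hG ?_
  let merged : G.Coloring {x // x ≠ j} := Coloring.mk
    (fun v => if hv : C v = j then ⟨i, hij⟩ else ⟨C v, hv⟩) fun {u v} huv => by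
      by_cases hu : C u = j <;> by_cases hv : C v = j <;>
        simp only [hu, hv, dite_true, dite_false, ne_eq, Subtype.mk.injEq]
      · exact fun _ => C.valid huv (hu.trans hv.symm)
      · exact fun hvi => h v u huv.symm hvi.symm hu
      · exact fun hui => h u v huv hui hv
      · exact C.valid huv
  simpa [Fintype.card_subtype_compl] using merged.colorable

lemma Coloring.choose_two_le_ncard_edgeSet [Finite V] {c : ℕ}
    (C : G.Coloring (Fin (c + 1))) (hG : ¬ G.Colorable c) :
    (c + 1).choose 2 ≤ G.edgeSet.ncard := by
  have hsurj : Function.Surjective (Hom.mapEdgeSet C) := by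
    rintro ⟨e, he⟩
    induction e using Sym2.ind with | _ i j => ?_
    obtain ⟨u, v, huv, rfl, rfl⟩ := C.exists_adj_of_not_colorable hG he
    exact ⟨⟨s(u, v), huv⟩, rfl⟩
  calc (c + 1).choose 2 = (⊤ : SimpleGraph (Fin (c + 1))).edgeSet.ncard := by
        rw [edgeSet_top, Sym2.ncard_diagSet_compl, Nat.card_fin]
    _ ≤ G.edgeSet.ncard := by
      rw [← Nat.card_coe_set_eq, ← Nat.card_coe_set_eq]
      exact Nat.card_le_card_of_surjective _ hsurj

lemma colorable_of_ncard_edgeSet_lt [Finite V] {k : ℕ}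
    (h : G.edgeSet.ncard < (k + 1).choose 2) : G.Colorable k := by
  classical
  have hex : ∃ n, G.Colorable n := ⟨_, @colorable_of_fintype _ G (Fintype.ofFinite V)⟩
  by_contra hk
  obtain ⟨c, hc⟩ : ∃ c, Nat.find hex = c + 1 :=
    Nat.exists_eq_succ_of_ne_zero fun h0 => hk ((h0 ▸ Nat.find_spec hex).mono (Nat.zero_le k))
  have hcol : G.Colorable (c + 1) := hc ▸ Nat.find_spec hex
  have hkc : k ≤ c := by
    by_contra! hck
    exact hk (hcol.mono hck)
  exact h.not_ge <| (Nat.choose_le_choose 2 (Nat.succ_le_succ hkc)).trans <|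
    hcol.some.choose_two_le_ncard_edgeSet (Nat.find_min hex (by omega))

end SimpleGraph

variable {V γ α β : Type*}

lemma containsCopy_top_iff {H : SimpleGraph γ} :
    ContainsCopy (⊤ : SimpleGraph α) H ↔ Nonempty ((⊤ : SimpleGraph α) →g H) :=
  ⟨fun ⟨f, _⟩ => ⟨f⟩, fun ⟨f⟩ => ⟨f, f.injective_of_top_hom⟩⟩

lemma Arrows.of_hom {F : SimpleGraph V} {F' : SimpleGraph γ} (φ : F →g F')
    (hF : Arrows F (⊤ : SimpleGraph α) (⊤ : SimpleGraph β)) :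
    Arrows F' (⊤ : SimpleGraph α) (⊤ : SimpleGraph β) := by
  intro R' _
  rcases hF (F ⊓ R'.comap φ) inf_le_left with hred | hblue
  · obtain ⟨f⟩ := containsCopy_top_iff.1 hred
    exact Or.inl <| containsCopy_top_iff.2 ⟨(⟨φ, fun h => h.2⟩ : F ⊓ R'.comap φ →g R').comp f⟩
  · obtain ⟨f⟩ := containsCopy_top_iff.1 hblue
    refine Or.inr <| containsCopy_top_iff.2
      ⟨(⟨φ, fun h => ?_⟩ : F \ (F ⊓ R'.comap φ) →g F' \ R').comp f⟩
    exact ⟨φ.map_adj h.1, fun hr => h.2 ⟨h.1, hr⟩⟩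

lemma sizeRamsey_le_choose_two {G : SimpleGraph α} {H : SimpleGraph β} {N : ℕ}
    (h : Arrows (⊤ : SimpleGraph (Fin N)) G H) : sizeRamsey G H ≤ N.choose 2 :=
  Nat.sInf_le ⟨N, ⊤, h, by rw [edgeSet_top, Sym2.ncard_diagSet_compl, Nat.card_fin]⟩

lemma choose_two_ramseyNumber_le_ncard_edgeSet [Finite V] {F : SimpleGraph V}
    (hF : Arrows F (⊤ : SimpleGraph α) (⊤ : SimpleGraph β)) :
    (ramseyNumber (⊤ : SimpleGraph α) (⊤ : SimpleGraph β)).choose 2 ≤ F.edgeSet.ncard := by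
  by_contra! h
  obtain ⟨k, hk⟩ : ∃ k, ramseyNumber (⊤ : SimpleGraph α) (⊤ : SimpleGraph β) = k + 1 :=
    Nat.exists_eq_succ_of_ne_zero fun h0 => by simp [h0] at h
  obtain ⟨C⟩ := colorable_of_ncard_edgeSet_lt (hk ▸ h)
  have : ramseyNumber (⊤ : SimpleGraph α) (⊤ : SimpleGraph β) ≤ k := Nat.sInf_le (hF.of_hom C)
  omega

theorem stmt1_general (m n : ℕ) :
    sizeRamsey (⊤ : SimpleGraph (Fin m)) (⊤ : SimpleGraph (Fin n)) =
      (ramseyNumber (⊤ : SimpleGraph (Fin m)) (⊤ : SimpleGraph (Fin n))).choose 2 := by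
  by_cases hA :
      ∃ N, Arrows (⊤ : SimpleGraph (Fin N)) (⊤ : SimpleGraph (Fin m)) (⊤ : SimpleGraph (Fin n))
  · refine le_antisymm (sizeRamsey_le_choose_two (Nat.sInf_mem hA)) ?_
    refine le_csInf ⟨_, _, ⊤, Nat.sInf_mem hA, rfl⟩ ?_
    rintro _ ⟨N, F, hF, rfl⟩
    exact choose_two_ramseyNumber_le_ncard_edgeSet hF
  -- Without a finite Ramsey number both sides are the junk value `sInf ∅ = 0`.
  have hr : ramseyNumber (⊤ : SimpleGraph (Fin m)) (⊤ : SimpleGraph (Fin n)) = 0 :=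
    Nat.sInf_eq_zero.mpr (Or.inr (Set.eq_empty_of_forall_notMem fun N hN => hA ⟨N, hN⟩))
  have hs : sizeRamsey (⊤ : SimpleGraph (Fin m)) (⊤ : SimpleGraph (Fin n)) = 0 := by
    refine Nat.sInf_eq_zero.mpr (Or.inr (Set.eq_empty_of_forall_notMem ?_))
    rintro _ ⟨N, F, hF, -⟩
    exact hA ⟨N, hF.of_hom (Hom.ofLE le_top)⟩
  rw [hr, hs]
  rfl

theorem stmt1 (m n : ℕ) (hm : 2 ≤ m) (hn : 2 ≤ n) :
    sizeRamsey (⊤ : SimpleGraph (Fin m)) (⊤ : SimpleGraph (Fin n)) =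
      (ramseyNumber (⊤ : SimpleGraph (Fin m)) (⊤ : SimpleGraph (Fin n))).choose 2 :=
  stmt1_general m n
end

section
/- The graph K_{k+1} + \overline{K_k}, obtained from the complete graph K_{k+1} by adding k new vertices and joining every vertex of K_{k+1} to all k new vertices, arrows (K_{1,k}, K_3): every red-blue coloring of its edges yields a red copy of K_{1,k} or a blue copy of K_3. Consequently r̂(K_{1,k}, K_3) ≤ C(2k+1, 2) − C(k, 2). -/
open SimpleGraph

/-- The graph `K_{k+1} + \overline{K_k}` : a complete graph on `k+1` vertices together with
`k` further vertices, each joined to all vertices of the `K_{k+1}`. -/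
def cliquePlusIndep (k : ℕ) : SimpleGraph (Fin (k+1) ⊕ Fin k) :=
  SimpleGraph.fromRel (fun x y => x.isLeft ∨ y.isLeft)

/-!
If some vertex has red degree at least `k`, it is the centre of a red `K_{1,k}`. Otherwise every
vertex of the `K_{k+1}` has degree `2k`, hence blue degree at least `k + 1`. Since only `k`
vertices lie outside the clique, the clique vertex `inl 0` has a blue neighbour `w` inside the
clique, and the blue neighbourhoods of `inl 0` and `w`, of total size at least `2k + 2` among
`2k + 1` vertices, meet in a vertex that closes a blue triangle. The edge count holds because
the graph is `K_{2k+1}` minus a `K_k`.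
-/

open Finset

section Containment

variable {α β γ δ : Type*} {G : SimpleGraph α} {H : SimpleGraph β}

theorem containsCopy_iff_isContained {A : SimpleGraph γ} :
    ContainsCopy G A ↔ G ⊑ A :=
  ⟨fun ⟨f, hf⟩ => ⟨⟨f, hf⟩⟩, fun ⟨f⟩ => ⟨f.toHom, f.injective⟩⟩

theorem Arrows.of_iso {F : SimpleGraph γ} {F' : SimpleGraph δ} (e : F ≃g F')
    (h : Arrows F G H) : Arrows F' G H := by
  intro R' hR'
  have hR : R'.comap e ≤ F := fun a b hab => e.map_adj_iff.1 (hR' hab)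
  have red : R'.comap e ⊑ R' := ⟨⟨⟨e, id⟩, e.injective⟩⟩
  have blue : F \ R'.comap e ⊑ F' \ R' :=
    ⟨⟨⟨e, fun hab => ⟨e.map_adj_iff.2 hab.1, hab.2⟩⟩, e.injective⟩⟩
  have := h _ hR
  simp only [containsCopy_iff_isContained] at this ⊢
  exact this.imp (·.trans red) (·.trans blue)

theorem sizeRamsey_le_of_arrows [Fintype γ] {F : SimpleGraph γ} (h : Arrows F G H) :
    sizeRamsey G H ≤ F.edgeSet.ncard := by
  let e := Fintype.equivFin γ
  let iso : F ≃g F.map e.toEmbedding := .map e F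
  refine Nat.sInf_le ⟨_, _, h.of_iso iso, ?_⟩
  rw [← Nat.card_coe_set_eq, ← Nat.card_coe_set_eq]
  exact Nat.card_congr iso.mapEdgeSet.symm

theorem starGraph_isContained_of_le_degree {V : Type*} [Fintype V] {R : SimpleGraph V}
    [DecidableRel R.Adj] {k : ℕ} {v : V} (hv : k ≤ R.degree v) : _root_.starGraph k ⊑ R := by
  obtain ⟨g⟩ : Nonempty (Fin k ↪ R.neighborSet v) :=
    Function.Embedding.nonempty_of_card_le (by rwa [Fintype.card_fin, card_neighborSet_eq_degree])
  refine ⟨⟨⟨Sum.elim (fun _ => v) (fun i => g i), ?_⟩, ?_⟩⟩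
  · rintro (_ | i) (_ | j) hij <;> simp only [_root_.starGraph, completeBipartiteGraph_adj] at hij
    · simp at hij
    · exact (g j).2
    · exact (g i).2.symm
    · simp at hij
  · rintro (_ | i) (_ | j) hij
    · exact congrArg Sum.inl (Subsingleton.elim _ _)
    · exact absurd hij (g j).2.ne
    · exact absurd hij.symm (g i).2.ne
    · exact congrArg Sum.inr (g.injective (Subtype.val_injective hij))

theorem top_fin_three_isContained_of_adj_of_card_lt_degree_add_degree {V : Type*} [Fintype V]
    [DecidableEq V] {B : SimpleGraph V} [DecidableRel B.Adj] {u w : V} (huw : B.Adj u w)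
    (hdeg : Fintype.card V < B.degree u + B.degree w) : (⊤ : SimpleGraph (Fin 3)) ⊑ B := by
  obtain ⟨x, hx⟩ := inter_nonempty_of_card_lt_card_add_card (subset_univ (B.neighborFinset u))
    (subset_univ (B.neighborFinset w)) hdeg
  simp only [mem_inter, mem_neighborFinset] at hx
  rw [← not_cliqueFree_iff_top_isContained]
  exact (is3Clique_triple_iff.2 ⟨huw, hx.1, hx.2⟩).not_cliqueFree

end Containment

theorem SimpleGraph.degree_sub_degree_le_degree_sdiff {V : Type*} [Fintype V] [DecidableEq V]
    (F R : SimpleGraph V) [DecidableRel F.Adj] [DecidableRel R.Adj] (v : V) :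
    F.degree v - R.degree v ≤ (F \ R).degree v := by
  simp only [← card_neighborFinset_eq_degree, neighborFinset_sdiff]
  exact le_card_sdiff _ _

theorem SimpleGraph.ncard_edgeSet_top {V : Type*} [Fintype V] [DecidableEq V] :
    (⊤ : SimpleGraph V).edgeSet.ncard = (Fintype.card V).choose 2 := by
  rw [← coe_edgeFinset, Set.ncard_coe_finset, card_edgeFinset_top_eq_card_choose_two]


section CliquePlusIndep

variable {k : ℕ}

theorem cliquePlusIndep_adj {x y : Fin (k+1) ⊕ Fin k} :
    (cliquePlusIndep k).Adj x y ↔ x ≠ y ∧ (x.isLeft ∨ y.isLeft) := by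
  simp only [cliquePlusIndep, fromRel_adj]
  tauto

instance : DecidableRel (cliquePlusIndep k).Adj := fun _ _ =>
  decidable_of_iff' _ cliquePlusIndep_adj

theorem cliquePlusIndep_eq_top_sdiff :
    cliquePlusIndep k = ⊤ \ (⊤ : SimpleGraph (Fin k)).map Function.Embedding.inr := by
  ext (a | a) (b | b) <;> simp [cliquePlusIndep_adj, map_adj]

theorem ncard_edgeSet_cliquePlusIndep :
    (cliquePlusIndep k).edgeSet.ncard = (2*k+1).choose 2 - k.choose 2 := by
  rw [cliquePlusIndep_eq_top_sdiff, edgeSet_sdiff, Set.ncard_sdiff (edgeSet_subset_edgeSet.2 le_top),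
    edgeSet_map, Set.ncard_image_of_injective _ Function.Embedding.inr.sym2Map.injective,
    ncard_edgeSet_top, ncard_edgeSet_top]
  simp [two_mul, add_right_comm]

theorem cliquePlusIndep_degree_inl (a : Fin (k+1)) :
    (cliquePlusIndep k).degree (.inl a) = 2*k := by
  have : (cliquePlusIndep k).neighborFinset (.inl a) = univ.erase (.inl a) := by
    ext y
    simp [cliquePlusIndep_adj, ne_comm]
  rw [← card_neighborFinset_eq_degree, this, card_erase_of_mem (mem_univ _), card_univ,
    Fintype.card_sum, Fintype.card_fin, Fintype.card_fin]
  omega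

theorem arrows_cliquePlusIndep_starGraph_top :
    Arrows (cliquePlusIndep k) (_root_.starGraph k) (⊤ : SimpleGraph (Fin 3)) := by
  classical
  intro R _
  simp only [containsCopy_iff_isContained]
  by_cases hred : ∃ v, k ≤ R.degree v
  · obtain ⟨v, hv⟩ := hred
    exact .inl (starGraph_isContained_of_le_degree hv)
  push Not at hred
  have hblue (a : Fin (k+1)) : k + 1 ≤ (cliquePlusIndep k \ R).degree (.inl a) := by
    have hsdiff := degree_sub_degree_le_degree_sdiff (cliquePlusIndep k) R (.inl a)
    rw [cliquePlusIndep_degree_inl] at hsdiff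
    have hlt := hred (.inl a)
    omega
  obtain ⟨a, hwa⟩ : ∃ a, (cliquePlusIndep k \ R).Adj (.inl 0) (.inl a) := by
    by_contra! h
    have : (cliquePlusIndep k \ R).neighborFinset (.inl 0) ⊆ univ.map .inr := by
      rintro (b | b) hb
      · exact absurd ((mem_neighborFinset _ _ _).1 hb) (h b)
      · simp
    have hle := card_le_card this
    rw [card_neighborFinset_eq_degree, card_map, card_univ, Fintype.card_fin] at hle
    have hge := hblue 0
    omega
  refine .inr (top_fin_three_isContained_of_adj_of_card_lt_degree_add_degree hwa ?_)
  have h₀ := hblue 0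
  have hₐ := hblue a
  rw [Fintype.card_sum, Fintype.card_fin, Fintype.card_fin]
  omega

end CliquePlusIndep

theorem stmt2_general (k : ℕ) :
    Arrows (cliquePlusIndep k) (_root_.starGraph k) (⊤ : SimpleGraph (Fin 3)) ∧
      sizeRamsey (_root_.starGraph k) (⊤ : SimpleGraph (Fin 3)) ≤
        (2*k+1).choose 2 - k.choose 2 :=
  ⟨arrows_cliquePlusIndep_starGraph_top,
    ncard_edgeSet_cliquePlusIndep ▸ sizeRamsey_le_of_arrows arrows_cliquePlusIndep_starGraph_top⟩

theorem stmt2 (k : ℕ) (hk : 1 ≤ k) :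
    Arrows (cliquePlusIndep k) (_root_.starGraph k) (⊤ : SimpleGraph (Fin 3)) ∧
      sizeRamsey (_root_.starGraph k) (⊤ : SimpleGraph (Fin 3)) ≤
        (2*k+1).choose 2 - k.choose 2 :=
  stmt2_general k
end

section
/- For every real ε with 0 < ε < 1 and every integer n ≥ 3, there exists k₀ such that for all k ≥ k₀, the size Ramsey number satisfies r̂(K_{1,k}, K_n) ≥ max{ k²/2, (1−ε)·⌊(n−2)²/4⌋·k²/2 }. -/
open SimpleGraph

/-! A graph `F ⟶ (K_{1,k}, K_n)` cannot be split into fewer than `n` vertex classes in which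
every vertex has fewer than `k` neighbours of its own class: colour the edges inside classes red
and the others blue; the classes properly colour the blue graph, so it has no `K_n`.
Let `S` be the set of vertices of degree at least `k`. If `2e(F) < k²` then `|S| < k`, and the
two classes `S`, `Sᶜ` contradict this. Write `n = a + b + 2`. If `2e(F) < abk²`, the set `T` of
vertices with at least `bk` neighbours in `S` has fewer than `ak` elements, so it splits into `a`
classes of size at most `k`; by Lovász's lemma `S \ T` splits into `b` classes in which every
vertex has fewer than `k` neighbours; together with `Sᶜ` these `a + b + 1 < n` classes are
again impossible. Finally take `a = ⌊(n-2)/2⌋` and `b = ⌈(n-2)/2⌉`, so that `ab = ⌊(n-2)²/4⌋`. -/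

open Finset

section Copies

variable {α β V : Type*}

theorem containsCopy_iff_isContained_s3 {G : SimpleGraph α} {H : SimpleGraph β} :
    ContainsCopy G H ↔ G ⊑ H :=
  ⟨fun ⟨f, hf⟩ => ⟨⟨f, hf⟩⟩, fun ⟨f⟩ => ⟨f.toHom, f.injective⟩⟩

theorem containsCopy_top_iff_not_cliqueFree {n : ℕ} {G : SimpleGraph V} :
    ContainsCopy (⊤ : SimpleGraph (Fin n)) G ↔ ¬ G.CliqueFree n := by
  rw [containsCopy_iff_isContained_s3, not_cliqueFree_iff_top_isContained]

theorem containsCopy_starGraph_iff [Fintype V] {k : ℕ} {R : SimpleGraph V} [DecidableRel R.Adj] :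
    ContainsCopy (_root_.starGraph k) R ↔ ∃ v, k ≤ R.degree v := by
  have hadj (i : Fin k) : (_root_.starGraph k).Adj (.inl 0) (.inr i) := by simp [_root_.starGraph]
  constructor
  · rintro ⟨f, hf⟩
    refine ⟨f (.inl 0), ?_⟩
    have hleaves : univ.map ⟨fun i => f (.inr i), hf.comp Sum.inr_injective⟩ ⊆
        R.neighborFinset (f (.inl 0)) := by
      intro w hw
      obtain ⟨i, -, rfl⟩ := mem_map.1 hw
      exact (R.mem_neighborFinset _ _).2 (f.map_adj (hadj i))
    simpa using card_le_card hleaves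
  · rintro ⟨v, hv⟩
    let leaf : Fin k ↪ R.neighborFinset v :=
      (Fin.castLEEmb hv).trans (R.neighborFinset v).equivFin.symm.toEmbedding
    have hleaf (i : Fin k) : R.Adj v (leaf i) := (R.mem_neighborFinset _ _).1 (leaf i).2
    refine ⟨⟨Sum.elim (fun _ => v) (fun i => leaf i), ?_⟩, ?_⟩
    · rintro (a | i) (b | j) h <;> simp_all [_root_.starGraph, adj_comm]
    · rintro (a | i) (b | j) h
      · simp [Subsingleton.elim a b]
      · exact absurd h (hleaf j).ne
      · exact absurd h (hleaf i).ne'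
      · simpa using leaf.injective (Subtype.ext h)

end Copies

theorem SimpleGraph.card_filter_adj_and_le_degree {V : Type*} [Fintype V] (G : SimpleGraph V)
    [DecidableRel G.Adj] (v : V) (p : V → Prop) [DecidablePred p] :
    #{w | G.Adj v w ∧ p w} ≤ G.degree v := by
  rw [← card_neighborFinset_eq_degree, neighborFinset_eq_filter]
  exact card_le_card (monotone_filter_right _ fun _ _ => And.left)

section DefectiveColoring

variable {V ι : Type*} [DecidableEq V] [DecidableEq ι] (G : SimpleGraph V) [DecidableRel G.Adj]

theorem sum_card_adj_same_color_eq (s : Finset V) (c : V → ι) {v : V} (hv : v ∈ s) :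
    ∑ x ∈ s, #{w ∈ s | G.Adj x w ∧ c w = c x} =
      2 * #{w ∈ s | G.Adj v w ∧ c w = c v} +
        ∑ x ∈ s.erase v, #{w ∈ s.erase v | G.Adj x w ∧ c w = c x} := by
  let g : V → V → ℕ := fun x w => if G.Adj x w ∧ c w = c x then 1 else 0
  have hsymm : ∑ x ∈ s.erase v, g x v = ∑ w ∈ s, g v w := by
    rw [← add_sum_erase s _ hv]
    simp only [g, G.loopless.irrefl v, false_and, if_false, zero_add]
    refine sum_congr rfl fun x _ => ?_
    simp only [G.adj_comm, eq_comm]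
  simp only [card_filter]
  rw [← add_sum_erase s _ hv, sum_congr rfl fun x _ => (add_sum_erase s (g x) hv).symm,
    sum_add_distrib]
  change _ + (∑ x ∈ s.erase v, g x v + _) = _
  rw [hsymm]
  ring

theorem exists_coloring_card_adj_same_color_lt [Fintype V] [Fintype ι] [Nonempty ι]
    (s : Finset V) {k : ℕ} (h : ∀ v ∈ s, #{w ∈ s | G.Adj v w} < Fintype.card ι * k) :
    ∃ c : V → ι, ∀ v ∈ s, #{w ∈ s | G.Adj v w ∧ c w = c v} < k := by
  obtain ⟨c, -, hmin⟩ := exists_min_image univ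
    (fun c : V → ι => ∑ x ∈ s, #{w ∈ s | G.Adj x w ∧ c w = c x}) univ_nonempty
  refine ⟨c, fun v hv => ?_⟩
  -- otherwise recolouring `v` with a colour rare among its neighbours in `s` lowers the potential
  by_contra! hk
  obtain ⟨j, -, hj⟩ := exists_card_fiber_lt_of_card_lt_mul (f := c) (t := univ) (h v hv)
  rw [filter_filter] at hj
  let c' := Function.update c v j
  have hrest : ∑ x ∈ s.erase v, #{w ∈ s.erase v | G.Adj x w ∧ c' w = c' x} =
      ∑ x ∈ s.erase v, #{w ∈ s.erase v | G.Adj x w ∧ c w = c x} := by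
    refine sum_congr rfl fun x hx => congrArg card (filter_congr fun w hw => ?_)
    simp [c', Function.update_of_ne (ne_of_mem_erase hx),
      Function.update_of_ne (ne_of_mem_erase hw)]
  have hv' : #{w ∈ s | G.Adj v w ∧ c' w = c' v} = #{w ∈ s | G.Adj v w ∧ c w = j} := by
    refine congrArg card (filter_congr fun w _ => ?_)
    simp +contextual [c', Function.update_of_ne (G.ne_of_adj _).symm]
  have := hmin c' (mem_univ _)
  rw [sum_card_adj_same_color_eq G s c hv, sum_card_adj_same_color_eq G s c' hv, hrest,
    hv'] at this
  omega

end DefectiveColoring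

theorem Arrows.exists_le_card_adj_same_class {V ι : Type*} [Fintype V] [Fintype ι]
    [DecidableEq ι] {F : SimpleGraph V} [DecidableRel F.Adj] {k n : ℕ}
    (hF : Arrows F (_root_.starGraph k) (⊤ : SimpleGraph (Fin n)))
    (L : V → ι) (hL : Fintype.card ι < n) :
    ∃ v, k ≤ #{w | F.Adj v w ∧ L w = L v} := by
  classical
  let blue := F ⊓ (⊤ : SimpleGraph ι).comap L
  rcases hF (F \ blue) sdiff_le with hred | hblue
  · obtain ⟨v, hv⟩ := containsCopy_starGraph_iff.1 hred
    refine ⟨v, hv.trans (card_le_card fun w => ?_)⟩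
    simp [blue, eq_comm]
  · rw [sdiff_sdiff_right_self, inf_of_le_right inf_le_left,
      containsCopy_top_iff_not_cliqueFree] at hblue
    let c : blue.Coloring ι := Coloring.mk L fun h => h.2
    exact (hblue (c.colorable.cliqueFree hL)).elim

theorem arrows_top_starGraph (n : ℕ) {k : ℕ} (hk : 0 < k) :
    Arrows (⊤ : SimpleGraph (Fin (n * k))) (_root_.starGraph k) (⊤ : SimpleGraph (Fin n)) := by
  classical
  intro R _
  by_cases h : ∃ v, k ≤ R.degree v
  · exact .inl (containsCopy_starGraph_iff.2 h)
  right
  push Not at h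
  have : NeZero k := ⟨hk.ne'⟩
  obtain ⟨c, hc⟩ := exists_coloring_card_adj_same_color_lt R univ (ι := Fin k) (k := 1)
    (by simpa [← neighborFinset_eq_filter] using h)
  obtain ⟨j, -, hj⟩ := exists_le_card_fiber_of_mul_le_card_of_maps_to (s := univ) (t := univ)
    (f := c) (n := n) (by simp) univ_nonempty (by simp [mul_comm])
  obtain ⟨t, hts, htn⟩ := exists_subset_card_eq hj
  rw [containsCopy_top_iff_not_cliqueFree]
  refine IsNClique.not_cliqueFree ⟨fun x hx y hy hxy => ⟨hxy, fun hxy' => ?_⟩, htn⟩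
  have hcx := (mem_filter.1 (hts hx)).2
  have hcy := (mem_filter.1 (hts hy)).2
  have := hc x (mem_univ x)
  rw [Nat.lt_one_iff, card_eq_zero, filter_eq_empty_iff] at this
  exact this (mem_univ y) ⟨hxy', hcy.trans hcx.symm⟩

namespace Arrows

variable {V : Type*} [Fintype V] [DecidableEq V] {F : SimpleGraph V} [DecidableRel F.Adj]
  {k n : ℕ}

theorem sq_le_sum_degree (hF : Arrows F (_root_.starGraph k) (⊤ : SimpleGraph (Fin n)))
    (hn : 3 ≤ n) : k ^ 2 ≤ ∑ v, F.degree v := by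
  by_contra! hlt
  let S : Finset V := {v | k ≤ F.degree v}
  have hS : #S < k := by
    refine Nat.lt_of_mul_lt_mul_right (a := k) ?_
    calc #S * k ≤ ∑ v ∈ S, F.degree v := card_nsmul_le_sum S _ k fun v hv => (mem_filter.1 hv).2
      _ ≤ ∑ v, F.degree v := sum_le_sum_of_subset (subset_univ S)
      _ < k * k := by rwa [← sq]
  obtain ⟨v, hv⟩ := hF.exists_le_card_adj_same_class (fun v => decide (v ∈ S)) (by simp; omega)
  by_cases hvS : v ∈ S
  · have : #{w | F.Adj v w ∧ decide (w ∈ S) = decide (v ∈ S)} ≤ #(S.erase v) :=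
      card_le_card fun w hw => by
        simp only [mem_filter, mem_univ, true_and, hvS, decide_true, decide_eq_true_eq] at hw
        exact mem_erase.2 ⟨hw.1.ne', hw.2⟩
    rw [card_erase_of_mem hvS] at this
    omega
  · have := F.card_filter_adj_and_le_degree v fun w => decide (w ∈ S) = decide (v ∈ S)
    simp [S] at hvS
    omega

theorem mul_mul_sq_le_sum_degree (hF : Arrows F (_root_.starGraph k) (⊤ : SimpleGraph (Fin n)))
    {a b : ℕ} (hab : a + b + 2 ≤ n) : a * b * k ^ 2 ≤ ∑ v, F.degree v := by
  rcases Nat.eq_zero_or_pos a with rfl | ha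
  · simp
  rcases Nat.eq_zero_or_pos b with rfl | hb
  · simp
  have : NeZero a := ⟨ha.ne'⟩
  have : NeZero b := ⟨hb.ne'⟩
  by_contra! hlt
  let S : Finset V := {v | k ≤ F.degree v}
  let T : Finset V := {v ∈ S | b * k ≤ #{w | F.Adj v w ∧ w ∈ S}}
  have hT : #T < a * k := by
    refine Nat.lt_of_mul_lt_mul_right (a := b * k) ?_
    calc #T * (b * k) ≤ ∑ v ∈ T, #{w | F.Adj v w ∧ w ∈ S} :=
          card_nsmul_le_sum T _ _ fun v hv => (mem_filter.1 hv).2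
      _ ≤ ∑ v ∈ T, F.degree v := sum_le_sum fun v _ => F.card_filter_adj_and_le_degree v _
      _ ≤ ∑ v, F.degree v := sum_le_sum_of_subset (subset_univ T)
      _ < a * k * (b * k) := by linarith
  obtain ⟨cT, hcT⟩ := exists_coloring_card_adj_same_color_lt ⊤ T (ι := Fin a) (k := k)
    fun v _ => (card_le_card (filter_subset _ T)).trans_lt (by simpa using hT)
  obtain ⟨cS, hcS⟩ := exists_coloring_card_adj_same_color_lt F (S \ T) (ι := Fin b) (k := k)
    fun v hv => by
      have hvT : v ∉ T := (mem_sdiff.1 hv).2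
      simp only [T, mem_filter, (mem_sdiff.1 hv).1, true_and, not_le] at hvT
      refine lt_of_le_of_lt (card_le_card fun w => ?_) (by simpa using hvT)
      simp +contextual
  let L : V → Option (Fin a ⊕ Fin b) := fun v =>
    if v ∈ S then some (if v ∈ T then .inl (cT v) else .inr (cS v)) else none
  obtain ⟨v, hv⟩ := hF.exists_le_card_adj_same_class L (by simp; omega)
  by_cases hvS : v ∈ S
  · by_cases hvT : v ∈ T
    · refine (hcT v hvT).not_ge (hv.trans (card_le_card fun w hw => ?_))
      simp [L, hvS, hvT] at hw ⊢
      obtain ⟨hadj, hwS, hwL⟩ := hw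
      split_ifs at hwL with hwT
      exact ⟨hwT, hadj.ne, Sum.inl_injective hwL⟩
    · refine (hcS v (mem_sdiff.2 ⟨hvS, hvT⟩)).not_ge (hv.trans (card_le_card fun w hw => ?_))
      simp [L, hvS, hvT] at hw ⊢
      obtain ⟨hadj, hwS, hwL⟩ := hw
      split_ifs at hwL with hwT
      exact ⟨⟨hwS, hwT⟩, hadj, Sum.inr_injective hwL⟩
  · have := F.card_filter_adj_and_le_degree v fun w => L w = L v
    simp [S] at hvS
    omega

end Arrows

theorem Nat.div_two_mul_sub_div_two (m : ℕ) : m / 2 * (m - m / 2) = m ^ 2 / 4 := by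
  obtain ⟨t, rfl | rfl⟩ := Nat.even_or_odd' m
  · rw [show 2 * t - 2 * t / 2 = t by omega, show (2 * t) ^ 2 = 4 * (t * t) by ring]
    simp
  · rw [show (2 * t + 1) / 2 = t by omega, show 2 * t + 1 - t = t + 1 by omega,
      show (2 * t + 1) ^ 2 = 4 * (t * (t + 1)) + 1 by ring]
    omega

theorem stmt3_general (ε : ℝ) (hε0 : 0 < ε) (n : ℕ) (hn : 3 ≤ n) :
    ∃ k₀ : ℕ, ∀ k : ℕ, k₀ ≤ k →
      (sizeRamsey (_root_.starGraph k) (⊤ : SimpleGraph (Fin n)) : ℝ) ≥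
        max ((k : ℝ)^2 / 2)
          ((1 - ε) * (((n-2)^2 / 4 : ℕ) : ℝ) * (k : ℝ)^2 / 2) := by
  classical
  refine ⟨1, fun k hk => ?_⟩
  obtain ⟨N, F, hF, hF_card⟩ : sizeRamsey (_root_.starGraph k) (⊤ : SimpleGraph (Fin n)) ∈
      {m | ∃ (N : ℕ) (F : SimpleGraph (Fin N)),
        Arrows F (_root_.starGraph k) (⊤ : SimpleGraph (Fin n)) ∧ F.edgeSet.ncard = m} :=
    Nat.sInf_mem ⟨_, n * k, ⊤, arrows_top_starGraph n hk, rfl⟩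
  set r := sizeRamsey (_root_.starGraph k) (⊤ : SimpleGraph (Fin n))
  have hsum : ∑ v, F.degree v = 2 * r := by
    rw [sum_degrees_eq_twice_card_edges, ← hF_card, ← coe_edgeFinset, Set.ncard_coe_finset]
  have h₁ : (k : ℝ) ^ 2 ≤ 2 * r := by exact_mod_cast hsum ▸ hF.sq_le_sum_degree hn
  have h₂ : (((n - 2) ^ 2 / 4 : ℕ) : ℝ) * k ^ 2 ≤ 2 * r := by
    have := hF.mul_mul_sq_le_sum_degree (a := (n - 2) / 2) (b := n - 2 - (n - 2) / 2) (by omega)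
    rw [Nat.div_two_mul_sub_div_two, hsum] at this
    exact_mod_cast this
  have : 0 ≤ ε * ((((n - 2) ^ 2 / 4 : ℕ) : ℝ) * k ^ 2) := by positivity
  exact max_le (by linarith) (by linarith)

theorem stmt3 (ε : ℝ) (hε0 : 0 < ε) (hε1 : ε < 1) (n : ℕ) (hn : 3 ≤ n) :
    ∃ k₀ : ℕ, ∀ k : ℕ, k₀ ≤ k →
      (sizeRamsey (_root_.starGraph k) (⊤ : SimpleGraph (Fin n)) : ℝ) ≥
        max ((k : ℝ)^2 / 2)
          ((1 - ε) * (((n-2)^2 / 4 : ℕ) : ℝ) * (k : ℝ)^2 / 2) :=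
  stmt3_general ε hε0 n hn
end

section
/- Let k ≥ 2 and n ≥ 1. If G is a graph such that G → (K_{1,k}, K_n), then the number of edges of G satisfies e(G) ≥ k²·C(n−1, 2). -/
open SimpleGraph

/-!
Colour an edge of `G` red when its endpoints get the same colour under a vertex colouring
`c : V → Fin (n - 1)`. A blue `K_n` would need `n` distinct colours, so `G → (K_{1,k}, K_n)` means
that every such colouring gives some vertex `k` neighbours of its own colour. Graphs with this
property for `N` colours have at least `k² C(N, 2)` edges, by induction on `N`.

If all degrees are below `kN`, an `N`-colouring with the fewest monochromatic edges gives every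
vertex fewer than `k` neighbours of its own colour, since recolouring a bad vertex with the rarest
colour among its neighbours would lower that number. Now let `G` have the property for `N + 1`
colours. While fewer than `k` vertices `T` have been set aside, some vertex outside `T` has at least
`kN` neighbours outside `T`: otherwise colour `G - T` with `N` colours and `T` with one more.
Setting aside `k` such vertices one at a time removes at least `k · kN` edges, and `G - T` keeps the
property for `N` colours, again because `T` can serve as an extra colour class.
-/

open Finset

namespace SimpleGraph

variable {V α : Type*}

def monochromatic (G : SimpleGraph V) (c : V → α) : SimpleGraph V where
  Adj a b := G.Adj a b ∧ c a = c b
  symm := ⟨fun _ _ h => ⟨h.1.symm, h.2.symm⟩⟩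
  loopless := ⟨fun _ h => G.loopless.irrefl _ h.1⟩

instance (G : SimpleGraph V) [DecidableRel G.Adj] [DecidableEq α] (c : V → α) :
    DecidableRel (G.monochromatic c).Adj :=
  fun _ _ => inferInstanceAs (Decidable (_ ∧ _))

def isolate (G : SimpleGraph V) (T : Finset V) : SimpleGraph V where
  Adj a b := G.Adj a b ∧ a ∉ T ∧ b ∉ T
  symm := ⟨fun _ _ h => ⟨h.1.symm, h.2.2, h.2.1⟩⟩
  loopless := ⟨fun _ h => G.loopless.irrefl _ h.1⟩

instance (G : SimpleGraph V) [DecidableRel G.Adj] [DecidableEq V] (T : Finset V) :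
    DecidableRel (G.isolate T).Adj :=
  fun _ _ => inferInstanceAs (Decidable (_ ∧ _))

lemma isolate_le (G : SimpleGraph V) (T : Finset V) : G.isolate T ≤ G := fun _ _ h => h.1

lemma isolate_insert [DecidableEq V] (G : SimpleGraph V) (T : Finset V) (v : V) :
    G.isolate (insert v T) = (G.isolate T).deleteIncidenceSet v := by
  ext a b
  simp only [isolate, deleteIncidenceSet_adj, mem_insert]
  tauto

/-- Every vertex has fewer than `k` neighbours of its own colour; in the usual terminology `c` is
a `(k - 1)`-defective colouring. -/
def IsDefectiveColoring [Fintype V] (G : SimpleGraph V) [DecidableRel G.Adj] [DecidableEq α]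
    (k : ℕ) (c : V → α) : Prop :=
  ∀ v, (G.monochromatic c).degree v < k

variable [Fintype V] (G : SimpleGraph V) [DecidableRel G.Adj]

lemma neighborFinset_monochromatic [DecidableEq α] (c : V → α) (v : V) :
    (G.monochromatic c).neighborFinset v = {u ∈ G.neighborFinset v | c u = c v} := by
  ext u
  rw [mem_neighborFinset, mem_filter, mem_neighborFinset]
  exact and_congr_right fun _ => eq_comm

lemma card_edgeFinset_monochromatic_update_lt [DecidableEq V] [DecidableEq α] {c : V → α}
    {w : V} {i : α} {k : ℕ} (hw : k ≤ (G.monochromatic c).degree w)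
    (hi : #{u ∈ G.neighborFinset w | c u = i} < k) :
    #(G.monochromatic (Function.update c w i)).edgeFinset < #(G.monochromatic c).edgeFinset := by
  set c' := Function.update c w i
  have hcw : c' w = i := Function.update_self w i c
  have hc' : ∀ a, a ≠ w → c' a = c a := fun a ha => Function.update_of_ne ha _ _
  have hdel : (G.monochromatic c').deleteIncidenceSet w =
      (G.monochromatic c).deleteIncidenceSet w := by
    ext a b
    simp only [deleteIncidenceSet_adj, monochromatic]
    constructor <;> rintro ⟨⟨hab, hc⟩, ha, hb⟩ <;> refine ⟨⟨hab, ?_⟩, ha, hb⟩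
    · rwa [hc' a ha, hc' b hb] at hc
    · rwa [hc' a ha, hc' b hb]
  have hdeg : (G.monochromatic c').degree w = #{u ∈ G.neighborFinset w | c u = i} := by
    rw [← card_neighborFinset_eq_degree, neighborFinset_monochromatic]
    congr 1
    refine filter_congr fun u hu => ?_
    rw [hc' u (G.ne_of_adj ((G.mem_neighborFinset w u).1 hu)).symm, hcw]
  have key := card_edgeFinset_deleteIncidenceSet (G.monochromatic c') w
  have key' := card_edgeFinset_deleteIncidenceSet (G.monochromatic c) w
  have : #((G.monochromatic c').deleteIncidenceSet w).edgeFinset =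
      #((G.monochromatic c).deleteIncidenceSet w).edgeFinset := by
    -- going through `ncard` avoids rewriting the graph inside its `Fintype` instance
    simp only [← Set.ncard_coe_finset, coe_edgeFinset, hdel]
  have := (G.monochromatic c).degree_le_card_edgeFinset w
  have := (G.monochromatic c').degree_le_card_edgeFinset w
  omega

theorem exists_isDefectiveColoring_of_degree_lt [DecidableEq V] {k N : ℕ}
    (h : ∀ v, G.degree v < k * N) : ∃ c : V → Fin N, G.IsDefectiveColoring k c := by
  have : Nonempty (V → Fin N) := by
    rcases isEmpty_or_nonempty V with _ | ⟨⟨v⟩⟩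
    · infer_instance
    · exact ⟨fun _ => ⟨0, Nat.pos_of_mul_pos_left (Nat.zero_lt_of_lt (h v))⟩⟩
  obtain ⟨c, -, hmin⟩ := exists_min_image univ
    (fun c : V → Fin N => #(G.monochromatic c).edgeFinset) univ_nonempty
  refine ⟨c, fun w => ?_⟩
  by_contra! hw
  obtain ⟨i, -, hi⟩ := exists_card_fiber_lt_of_card_lt_mul (s := G.neighborFinset w)
    (t := univ) (f := c) (n := k) (by simpa [mul_comm] using h w)
  exact (hmin _ (mem_univ _)).not_gt (G.card_edgeFinset_monochromatic_update_lt hw hi)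

theorem isDefectiveColoring_of_isolate [DecidableEq V] {T : Finset V} {k N : ℕ} (hT : #T ≤ k)
    {c : V → Fin N} (hc : (G.isolate T).IsDefectiveColoring k c) :
    G.IsDefectiveColoring k (fun v => if v ∈ T then Fin.last N else (c v).castSucc) := by
  intro v
  rw [← card_neighborFinset_eq_degree, neighborFinset_monochromatic]
  by_cases hv : v ∈ T
  · calc _ ≤ #(T.erase v) := card_le_card fun u hu => by
          simp only [mem_filter, mem_neighborFinset, hv, if_true] at hu
          refine mem_erase.2 ⟨(G.ne_of_adj hu.1).symm, ?_⟩
          by_contra huT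
          simp [huT, Fin.castSucc_ne_last] at hu
      _ < k := by rw [card_erase_of_mem hv]; have := card_pos.2 ⟨v, hv⟩; omega
  · refine lt_of_le_of_lt (card_le_card fun u hu => ?_) (hc v)
    simp only [mem_filter, mem_neighborFinset, hv, if_false] at hu
    have huT : u ∉ T := fun huT => by simp [huT, (Fin.castSucc_ne_last _).symm] at hu
    simp only [huT, if_false, Fin.castSucc_inj] at hu
    rw [mem_neighborFinset]
    exact ⟨⟨hu.1, hv, huT⟩, hu.2.symm⟩

theorem exists_mul_le_degree_isolate [DecidableEq V] {k N : ℕ} (hN : 0 < N)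
    (hG : ∀ c : V → Fin (N + 1), ¬ G.IsDefectiveColoring k c) {T : Finset V} (hT : #T < k) :
    ∃ v ∉ T, k * N ≤ (G.isolate T).degree v := by
  by_contra! h
  have hdeg : ∀ v, (G.isolate T).degree v < k * N := by
    intro v
    by_cases hv : v ∈ T
    · rw [← card_neighborFinset_eq_degree, card_eq_zero.2]
      · exact Nat.mul_pos (Nat.zero_lt_of_lt hT) hN
      · exact eq_empty_of_forall_notMem fun u hu => ((mem_neighborFinset _ _ _).1 hu).2.1 hv
    · exact h v hv
  obtain ⟨c, hc⟩ := (G.isolate T).exists_isDefectiveColoring_of_degree_lt hdeg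
  exact hG _ (G.isDefectiveColoring_of_isolate hT.le hc)

lemma card_edgeFinset_isolate_insert [DecidableEq V] (T : Finset V) (v : V) :
    #(G.isolate (insert v T)).edgeFinset + (G.isolate T).degree v = #(G.isolate T).edgeFinset := by
  have h := card_edgeFinset_deleteIncidenceSet (G.isolate T) v
  have := (G.isolate T).degree_le_card_edgeFinset v
  have : #(G.isolate (insert v T)).edgeFinset =
      #((G.isolate T).deleteIncidenceSet v).edgeFinset := by
    simp only [← Set.ncard_coe_finset, coe_edgeFinset, isolate_insert]
  omega

theorem exists_card_edgeFinset_isolate_add_le [DecidableEq V] {k N : ℕ} (hN : 0 < N)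
    (hG : ∀ c : V → Fin (N + 1), ¬ G.IsDefectiveColoring k c) :
    ∃ T : Finset V, #T = k ∧ #(G.isolate T).edgeFinset + k * (k * N) ≤ #G.edgeFinset := by
  suffices ∀ t ≤ k, ∃ T : Finset V, #T = t ∧
      #(G.isolate T).edgeFinset + t * (k * N) ≤ #G.edgeFinset from this k le_rfl
  intro t ht
  induction t with
  | zero => exact ⟨∅, rfl, by simpa using card_le_card (edgeFinset_mono (G.isolate_le ∅))⟩
  | succ t ih =>
    obtain ⟨T, rfl, hT⟩ := ih (by omega)
    obtain ⟨v, hv, hdeg⟩ := G.exists_mul_le_degree_isolate hN hG (T := T) (by omega)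
    refine ⟨insert v T, card_insert_of_notMem hv, ?_⟩
    have := G.card_edgeFinset_isolate_insert T v
    linarith

theorem pow_two_mul_choose_le_card_edgeFinset [DecidableEq V] {k N : ℕ}
    (hG : ∀ c : V → Fin N, ¬ G.IsDefectiveColoring k c) :
    k ^ 2 * N.choose 2 ≤ #G.edgeFinset := by
  induction N generalizing G with
  | zero => simp
  | succ N ih =>
    rcases N.eq_zero_or_pos with rfl | hN
    · simp
    obtain ⟨T, hTk, hcard⟩ := G.exists_card_edgeFinset_isolate_add_le hN hG
    have hrest := ih (G.isolate T) fun c hc => hG _ (G.isDefectiveColoring_of_isolate hTk.le hc)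
    calc k ^ 2 * (N + 1).choose 2 = k ^ 2 * N.choose 2 + k * (k * N) := by
          rw [Nat.choose_succ_succ', Nat.choose_one_right]; ring
      _ ≤ _ := by omega

theorem not_isDefectiveColoring_of_arrows {k n : ℕ} (hn : 1 ≤ n)
    (hG : Arrows G (_root_.starGraph k) (⊤ : SimpleGraph (Fin n))) (c : V → Fin (n - 1)) :
    ¬ G.IsDefectiveColoring k c := by
  rcases hG (G.monochromatic c) fun _ _ h => h.1 with ⟨f, hf⟩ | ⟨f, hf⟩
  · intro hc
    refine (hc (f (.inl 0))).not_ge ?_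
    calc k = #(univ : Finset (Fin k)) := (card_fin k).symm
      _ ≤ _ := card_le_card_of_injOn (fun i => f (.inr i))
        (fun i _ => (mem_neighborFinset _ _ _).2 (f.map_adj (by simp [_root_.starGraph])))
        (fun i _ j _ hij => Sum.inr_injective (hf hij))
  · have hinj : Function.Injective (c ∘ f) := fun i j hij => by
      by_contra hne
      obtain ⟨hadj, hnot⟩ := (sdiff_adj _ _ _ _).1 (f.map_adj hne)
      exact hnot ⟨hadj, hij⟩
    have := Fintype.card_le_of_injective _ hinj
    simp only [Fintype.card_fin] at this
    omega

end SimpleGraph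

theorem stmt7_general {V : Type*} [Fintype V] (k n : ℕ) (hn : 1 ≤ n)
    (G : SimpleGraph V) (hG : Arrows G (_root_.starGraph k) (⊤ : SimpleGraph (Fin n))) :
    k^2 * (n-1).choose 2 ≤ G.edgeSet.ncard := by
  classical
  rw [← coe_edgeFinset, Set.ncard_coe_finset]
  exact G.pow_two_mul_choose_le_card_edgeFinset (G.not_isDefectiveColoring_of_arrows hn hG)

theorem stmt7 {V : Type*} [Fintype V] (k n : ℕ) (hk : 2 ≤ k) (hn : 1 ≤ n)
    (G : SimpleGraph V) (hG : Arrows G (_root_.starGraph k) (⊤ : SimpleGraph (Fin n))) :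
    k^2 * (n-1).choose 2 ≤ G.edgeSet.ncard :=
  stmt7_general k n hn G hG
end

section
/- Let k ≥ 2 and let G be a graph with at least C(k,2) + 1 edges. Then either (i) G contains an induced subgraph on k+1 vertices with minimum degree at least 1, or (ii) G contains a matching M with |M| = e(G), i.e., the edge set of G is itself a matching of size e(G). -/
/-!
If the edges of `G` do not form a matching, some vertex `b` has two neighbours `a ≠ c`.
Since `G` has more than `C(k, 2)` edges, more than `k` vertices are non-isolated. Starting from
`{a, b, c}` and adding, one step at a time, a non-isolated vertex together with a neighbour, we
reach a set `X` of size `k + 1` or `k + 2` in which every vertex has a neighbour. In the second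
case one vertex of `X` can be deleted, because `G[X]` is not a perfect matching: `b` has degree
at least two in it.
-/

open SimpleGraph

namespace SimpleGraph

variable {V : Type*} (G : SimpleGraph V)

def InducesNoIsolated (X : Set V) : Prop := ∀ v ∈ X, ∃ u ∈ X, G.Adj v u

variable {G}

namespace InducesNoIsolated

theorem subset_support {X : Set V} (hX : G.InducesNoIsolated X) : X ⊆ G.support :=
  fun v hv ↦ let ⟨u, _, huv⟩ := hX v hv; ⟨u, huv⟩

theorem union {X Y : Set V} (hX : G.InducesNoIsolated X) (hY : G.InducesNoIsolated Y) :
    G.InducesNoIsolated (X ∪ Y) := by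
  rintro v (hv | hv)
  · obtain ⟨u, hu, huv⟩ := hX v hv
    exact ⟨u, .inl hu, huv⟩
  · obtain ⟨u, hu, huv⟩ := hY v hv
    exact ⟨u, .inr hu, huv⟩

theorem of_adj {u v : V} (h : G.Adj u v) : G.InducesNoIsolated {u, v} := by
  rintro w (rfl | rfl)
  · exact ⟨v, by simp, h⟩
  · exact ⟨u, by simp, h.symm⟩

theorem of_adj_adj {a b c : V} (hba : G.Adj b a) (hbc : G.Adj b c) :
    G.InducesNoIsolated {a, b, c} := by
  convert (of_adj hba.symm).union (of_adj hbc) using 1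
  ext
  simp only [Set.mem_insert_iff, Set.mem_singleton_iff, Set.mem_union]
  tauto

theorem exists_diff_singleton {X : Set V} (hfin : X.Finite) (hX : G.InducesNoIsolated X)
    {a b c : V} (ha : a ∈ X) (hb : b ∈ X) (hc : c ∈ X) (hac : a ≠ c)
    (hba : G.Adj b a) (hbc : G.Adj b c) :
    ∃ v ∈ X, G.InducesNoIsolated (X \ {v}) := by
  by_contra! hbad
  -- Otherwise every `v ∈ X` carries a pendant vertex `f v` of `G[X]` whose only neighbour is `v`;
  -- `f` is injective, hence onto `X`, so every vertex of `G[X]` has degree one, `b` included.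
  have hpendant : ∀ v ∈ X, ∃ u ∈ X, ∀ w ∈ X, G.Adj u w → w = v := by
    intro v hv
    obtain ⟨u, ⟨hu, huv⟩, hiso⟩ := not_forall₂.mp (hbad v hv)
    exact ⟨u, hu, fun w hw huw ↦ by_contra fun hwv ↦ hiso ⟨w, ⟨hw, hwv⟩, huw⟩⟩
  choose! f hfX hf using hpendant
  have hadj : ∀ v ∈ X, G.Adj (f v) v := fun v hv ↦ by
    obtain ⟨w, hw, hvw⟩ := hX (f v) (hfX v hv)
    exact hf v hv w hw hvw ▸ hvw
  have hinj : Set.InjOn f X := fun v hv v' hv' hvv' ↦ hf v' hv' v hv (hvv' ▸ hadj v hv)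
  obtain ⟨v, hv, rfl⟩ := (hfin.injOn_iff_bijOn_of_mapsTo hfX).mp hinj |>.surjOn hb
  exact hac ((hf v hv a ha hba).trans (hf v hv c hc hbc).symm)

end InducesNoIsolated

theorem exists_adj_adj_of_not_pairwise
    (h : ¬ G.edgeSet.Pairwise fun e f => ∀ v : V, v ∈ e → v ∉ f) :
    ∃ a b c, a ≠ c ∧ G.Adj b a ∧ G.Adj b c := by
  simp only [Set.Pairwise, not_forall, not_not] at h
  obtain ⟨e, he, f, hf, hef, b, hbe, hbf⟩ := h
  obtain ⟨a, rfl⟩ := Sym2.mem_iff_exists.mp hbe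
  obtain ⟨c, rfl⟩ := Sym2.mem_iff_exists.mp hbf
  exact ⟨a, b, c, fun hac ↦ hef (hac ▸ rfl), he, hf⟩

variable [Fintype V]

theorem InducesNoIsolated.exists_ncard_succ_or_succ_succ {X : Set V}
    (hX : G.InducesNoIsolated X) (hlt : X.ncard < G.support.ncard) :
    ∃ Y, X ⊆ Y ∧ G.InducesNoIsolated Y ∧ (Y.ncard = X.ncard + 1 ∨ Y.ncard = X.ncard + 2) := by
  obtain ⟨v, ⟨u, hvu⟩, hvX⟩ := Set.exists_of_ssubset
    (hX.subset_support.ssubset_of_ne (by rintro rfl; exact hlt.false))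
  have hv : (insert v X).ncard = X.ncard + 1 := Set.ncard_insert_of_notMem hvX
  have hu : (insert u (insert v X)).ncard ≤ (insert v X).ncard + 1 := Set.ncard_insert_le _ _
  have hu' : (insert v X).ncard ≤ (insert u (insert v X)).ncard :=
    Set.ncard_le_ncard (Set.subset_insert _ _)
  refine ⟨insert u (insert v X), fun w hw ↦ .inr (.inr hw), ?_, by omega⟩
  simpa [Set.insert_union, Set.pair_comm] using hX.union (of_adj hvu)

theorem InducesNoIsolated.exists_superset_ncard {X₀ : Set V} (hX₀ : G.InducesNoIsolated X₀)
    {n : ℕ} (hn₀ : X₀.ncard ≤ n) (hn : n ≤ G.support.ncard) :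
    ∃ X, X₀ ⊆ X ∧ G.InducesNoIsolated X ∧ (X.ncard = n ∨ X.ncard = n + 1) := by
  induction n, hn₀ using Nat.le_induction with
  | base => exact ⟨X₀, subset_rfl, hX₀, .inl rfl⟩
  | succ n _ ih =>
    obtain ⟨X, hX₀X, hX, hcard | hcard⟩ := ih (by omega)
    · obtain ⟨Y, hXY, hY, hYcard⟩ := hX.exists_ncard_succ_or_succ_succ (by omega)
      exact ⟨Y, hX₀X.trans hXY, hY, by omega⟩
    · exact ⟨X, hX₀X, hX, .inl hcard⟩

theorem ncard_edgeSet_le_choose_ncard_support :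
    G.edgeSet.ncard ≤ G.support.ncard.choose 2 := by
  classical
  calc G.edgeSet.ncard = (G.induce G.support).edgeFinset.card := by
        rw [card_edgeFinset_induce_support, ← coe_edgeFinset, Set.ncard_coe_finset]
    _ ≤ (Fintype.card G.support).choose 2 := card_edgeFinset_le_card_choose_two
    _ = G.support.ncard.choose 2 := by rw [← Nat.card_coe_set_eq, Nat.card_eq_fintype_card]

end SimpleGraph

theorem stmt9 {V : Type*} [Fintype V] (k : ℕ) (hk : 2 ≤ k) (G : SimpleGraph V)
    (hG : k.choose 2 + 1 ≤ G.edgeSet.ncard) :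
    (∃ X : Set V, X.ncard = k + 1 ∧ ∀ v ∈ X, ∃ u ∈ X, G.Adj v u) ∨
    (∃ M : Set (Sym2 V), M ⊆ G.edgeSet ∧ M.ncard = G.edgeSet.ncard ∧
      M.Pairwise fun e f => ∀ v : V, v ∈ e → v ∉ f) := by
  by_cases hM : G.edgeSet.Pairwise fun e f => ∀ v : V, v ∈ e → v ∉ f
  · exact .inr ⟨G.edgeSet, subset_rfl, rfl, hM⟩
  left
  obtain ⟨a, b, c, hac, hba, hbc⟩ := exists_adj_adj_of_not_pairwise hM
  have hsupport : k + 1 ≤ G.support.ncard := by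
    by_contra! h
    have := Nat.choose_le_choose 2 (Nat.le_of_lt_succ h)
    have := G.ncard_edgeSet_le_choose_ncard_support
    omega
  have habc : ({a, b, c} : Set V).ncard = 3 :=
    Set.ncard_eq_three.mpr ⟨a, b, c, hba.ne', hac, hbc.ne, rfl⟩
  obtain ⟨X, habcX, hX, hcard | hcard⟩ :=
    (InducesNoIsolated.of_adj_adj hba hbc).exists_superset_ncard (by omega) hsupport
  · exact ⟨X, hcard, hX⟩
  obtain ⟨v, hv, hXv⟩ := hX.exists_diff_singleton X.toFinite (habcX (by simp))
    (habcX (by simp)) (habcX (by simp)) hac hba hbc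
  exact ⟨X \ {v}, by rw [Set.ncard_sdiff_singleton_of_mem hv]; omega, hXv⟩
end

section
/- Let k ≥ 3 be odd and let G be a graph with at least C(k,2) + 1 edges. Then G contains an induced subgraph on k+1 vertices with minimum degree at least 1. -/
open SimpleGraph

/-!
Every edge of `G` has both ends in the support of `G`, so `C(k, 2) + 1` edges force at least
`k + 1` non-isolated vertices. Sets without isolated vertices then grow two vertices at a time
up to any even size not exceeding the support: if some edge avoids the current set `X`, add its
two ends; otherwise every edge meets `X`, so any two non-isolated vertices outside `X` have all
their neighbours in `X` and can be added. Since `k` is odd, `k + 1` is such a size.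
-/

namespace SimpleGraph

variable {V : Type*} (G : SimpleGraph V)

def NoIsolatedOn (X : Set V) : Prop := ∀ v ∈ X, ∃ u ∈ X, G.Adj v u

variable {G}

lemma noIsolatedOn_empty : G.NoIsolatedOn ∅ := by
  simp [NoIsolatedOn]

lemma NoIsolatedOn.insert_insert {X : Set V} {u w : V} (hX : G.NoIsolatedOn X)
    (hu : ∃ x ∈ insert u (insert w X), G.Adj u x) (hw : ∃ x ∈ insert u (insert w X), G.Adj w x) :
    G.NoIsolatedOn (insert u (insert w X)) := by
  rintro v (rfl | rfl | hv)
  · exact hu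
  · exact hw
  · obtain ⟨x, hx, hvx⟩ := hX v hv
    exact ⟨x, .inr (.inr hx), hvx⟩

lemma NoIsolatedOn.exists_insert_insert [Finite V] {X : Set V} (hX : G.NoIsolatedOn X)
    (h : X.ncard + 2 ≤ G.support.ncard) :
    ∃ u w, u ∉ X ∧ w ∉ X ∧ u ≠ w ∧ G.NoIsolatedOn (insert u (insert w X)) := by
  by_cases hout : ∃ u w, u ∉ X ∧ w ∉ X ∧ G.Adj u w
  · obtain ⟨u, w, hu, hw, huw⟩ := hout
    exact ⟨u, w, hu, hw, huw.ne, hX.insert_insert ⟨w, by simp, huw⟩ ⟨u, by simp, huw.symm⟩⟩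
  push Not at hout
  have hnbr : ∀ v ∈ G.support \ X, ∃ x ∈ X, G.Adj v x := by
    rintro v ⟨⟨x, hvx⟩, hv⟩
    exact ⟨x, by_contra fun hx ↦ hout v x hv hx hvx, hvx⟩
  have htwo : 1 < (G.support \ X).ncard := by
    have := Set.le_ncard_sdiff X G.support
    omega
  obtain ⟨u, w, hu, hw, huw⟩ := (Set.one_lt_ncard_iff).1 htwo
  obtain ⟨x, hx, hux⟩ := hnbr u hu
  obtain ⟨y, hy, hwy⟩ := hnbr w hw
  exact ⟨u, w, hu.2, hw.2, huw,
    hX.insert_insert ⟨x, .inr (.inr hx), hux⟩ ⟨y, .inr (.inr hy), hwy⟩⟩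

variable (G) in
theorem exists_ncard_eq_noIsolatedOn [Finite V] {n : ℕ} (hn : Even n)
    (h : n ≤ G.support.ncard) : ∃ X : Set V, X.ncard = n ∧ G.NoIsolatedOn X := by
  obtain ⟨m, rfl⟩ := hn
  induction m with
  | zero => exact ⟨∅, Set.ncard_empty V, noIsolatedOn_empty⟩
  | succ m ih =>
    obtain ⟨X, hXcard, hX⟩ := ih (by omega)
    obtain ⟨u, w, hu, hw, huw, hX'⟩ := hX.exists_insert_insert (by omega)
    refine ⟨insert u (insert w X), ?_, hX'⟩
    rw [Set.ncard_insert_of_notMem (by simp [huw, hu]), Set.ncard_insert_of_notMem hw, hXcard]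
    omega

variable (G) in
theorem ncard_edgeSet_le_choose_two_ncard_support [Fintype V] :
    G.edgeSet.ncard ≤ G.support.ncard.choose 2 := by
  classical
  calc G.edgeSet.ncard = (G.induce G.support).edgeFinset.card := by
        rw [card_edgeFinset_induce_support, ← coe_edgeFinset, Set.ncard_coe_finset]
    _ ≤ (Fintype.card G.support).choose 2 := card_edgeFinset_le_card_choose_two
    _ = G.support.ncard.choose 2 := by rw [Set.ncard_eq_toFinset_card', Set.toFinset_card]

end SimpleGraph

theorem stmt10_general {V : Type*} [Fintype V] (k : ℕ) (hodd : Odd k)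
    (G : SimpleGraph V) (hG : k.choose 2 + 1 ≤ G.edgeSet.ncard) :
    ∃ X : Set V, X.ncard = k + 1 ∧ ∀ v ∈ X, ∃ u ∈ X, G.Adj v u := by
  have hsupport : k + 1 ≤ G.support.ncard := by
    by_contra! h
    have := Nat.choose_le_choose 2 (Nat.le_of_lt_succ h)
    have := G.ncard_edgeSet_le_choose_two_ncard_support
    omega
  exact G.exists_ncard_eq_noIsolatedOn hodd.add_one hsupport

theorem stmt10 {V : Type*} [Fintype V] (k : ℕ) (hk : 3 ≤ k) (hodd : Odd k)
    (G : SimpleGraph V) (hG : k.choose 2 + 1 ≤ G.edgeSet.ncard) :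
    ∃ X : Set V, X.ncard = k + 1 ∧ ∀ v ∈ X, ∃ u ∈ X, G.Adj v u :=
  stmt10_general k hodd G hG
end

section
/- Let k ≥ 2, n ≥ 3, and let G be a graph on k(n−1)+1+ℓ vertices with ℓ ≥ 0. Suppose the complement of G contains ℓ+1 pairwise disjoint vertex subsets A₁, …, A_{ℓ+1}, each of size k+1, such that each induced subgraph (complement of G)[A_i] has minimum degree at least 1, and suppose ℓ + 1 ≤ n − 1 and (k+1)(ℓ+1) + k(n−2−ℓ) = k(n−1)+1+ℓ. Then G does not arrow (K_{1,k}, K_n): there is a red-blue coloring of the edges of G with no red K_{1,k} and no blue K_n, obtained by partitioning V(G) into X₁ = A₁, …, X_{ℓ+1} = A_{ℓ+1} and sets X_{ℓ+2}, …, X_{n−1} of size k, coloring all edges inside each X_i red and all other edges blue. -/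
/-!
Colour red the edges of `G` inside the parts of a partition of `V` into the sets `A i` and
`n - 2 - ℓ` further parts of at most `k` vertices each, and blue all other edges. With only
`n - 1` parts, any `n` vertices contain two in the same part, joined (if at all) by a red edge,
so there is no blue `K_n`. The `k` leaves of a red star lie in the part of its centre; a part
of at most `k` vertices is too small for that, and in a part `A i` of `k + 1` vertices every
vertex has a non-neighbour in `G`.
-/

open SimpleGraph

open Function

namespace SimpleGraph

variable {V ι : Type*}

def withinFibers (G : SimpleGraph V) (c : V → ι) : SimpleGraph V where
  Adj u v := G.Adj u v ∧ c u = c v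
  symm := ⟨fun _ _ h => ⟨h.1.symm, h.2.symm⟩⟩
  loopless := ⟨fun v h => G.loopless.irrefl v h.1⟩

variable {G : SimpleGraph V} {c : V → ι}

theorem withinFibers_le : G.withinFibers c ≤ G := fun _ _ h => h.1

theorem neighborSet_withinFibers_subset (v : V) :
    (G.withinFibers c).neighborSet v ⊆ c ⁻¹' {c v} \ {v} :=
  fun _ h => ⟨h.2.symm, (G.ne_of_adj h.1).symm⟩

theorem ncard_neighborSet_withinFibers_lt [Finite V] {k : ℕ} (v : V)
    (hfib : (c ⁻¹' {c v}).ncard ≤ k) : ((G.withinFibers c).neighborSet v).ncard < k :=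
  calc ((G.withinFibers c).neighborSet v).ncard
      ≤ (c ⁻¹' {c v} \ {v}).ncard := Set.ncard_le_ncard (neighborSet_withinFibers_subset v)
    _ < (c ⁻¹' {c v}).ncard := Set.ncard_sdiff_singleton_lt_of_mem rfl
    _ ≤ k := hfib

theorem ncard_neighborSet_withinFibers_lt_of_not_adj [Finite V] {k : ℕ} {u v : V}
    (hfib : (c ⁻¹' {c v}).ncard ≤ k + 1) (huv : c u = c v) (hne : u ≠ v)
    (hnadj : ¬ G.Adj v u) :
    ((G.withinFibers c).neighborSet v).ncard < k := by
  have hsub : (G.withinFibers c).neighborSet v ⊆ (c ⁻¹' {c v} \ {v}) \ {u} :=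
    fun w hw => ⟨neighborSet_withinFibers_subset v hw, by rintro rfl; exact hnadj hw.1⟩
  have := Set.ncard_le_ncard hsub
  have := Set.ncard_sdiff_singleton_lt_of_mem (s := c ⁻¹' {c v} \ {v}) ⟨huv, hne⟩
  have := Set.ncard_sdiff_singleton_lt_of_mem (s := c ⁻¹' {c v}) (a := v) rfl
  omega

theorem not_containsCopy_top_sdiff_withinFibers {W : Type*} [Fintype ι] [Fintype W]
    (h : Fintype.card ι < Fintype.card W) :
    ¬ ContainsCopy (⊤ : SimpleGraph W) (G \ G.withinFibers c) := by
  rintro ⟨f, hf⟩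
  obtain ⟨a, b, hab, hcab⟩ := Fintype.exists_ne_map_eq_of_card_lt (c ∘ f) h
  have hadj := f.map_adj (by simpa using hab)
  exact hadj.2 ⟨hadj.1, hcab⟩

end SimpleGraph

theorem not_containsCopy_starGraph {V : Type*} [Finite V] {H : SimpleGraph V} {k : ℕ}
    (h : ∀ v, (H.neighborSet v).ncard < k) : ¬ ContainsCopy (_root_.starGraph k) H := by
  rintro ⟨f, hf⟩
  let leaf : Fin k → H.neighborSet (f (.inl 0)) :=
    fun t => ⟨f (.inr t), f.map_adj (by simp [_root_.starGraph])⟩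
  have hleaf : Injective leaf := fun s t hst =>
    Sum.inr_injective (hf (congrArg Subtype.val hst))
  have := Nat.card_le_card_of_injective leaf hleaf
  rw [Nat.card_fin, Nat.card_coe_set_eq] at this
  exact (h _).not_ge this

theorem not_arrows_starGraph_top_of_withinFibers {V ι W : Type*} [Finite V] [Fintype ι]
    [Fintype W] {G : SimpleGraph V} {k : ℕ} (c : V → ι)
    (hc : Fintype.card ι < Fintype.card W)
    (hdeg : ∀ v, ((G.withinFibers c).neighborSet v).ncard < k) :
    ¬ Arrows G (_root_.starGraph k) (⊤ : SimpleGraph W) := by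
  intro h
  rcases h _ withinFibers_le with hred | hblue
  exacts [not_containsCopy_starGraph hdeg hred, not_containsCopy_top_sdiff_withinFibers hc hblue]

theorem exists_map_fin_ncard_preimage_le {B : Type*} [Finite B] {k m : ℕ}
    (h : Nat.card B ≤ k * m) : ∃ g : B → Fin m, ∀ j, (g ⁻¹' {j}).ncard ≤ k := by
  cases nonempty_fintype B
  obtain ⟨e⟩ := Embedding.nonempty_of_card_le (β := Fin m × Fin k)
    (by simpa [Nat.card_eq_fintype_card, mul_comm] using h)
  refine ⟨fun b => (e b).1, fun j => ?_⟩
  calc _ ≤ (Set.univ : Set (Fin k)).ncard :=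
        Set.ncard_le_ncard_of_injOn (fun b => (e b).2) (fun _ _ => trivial)
          (fun a ha b hb hab => e.injective (Prod.ext (ha.trans hb.symm) hab))
    _ = k := by simp

theorem exists_sum_map_preimage_inl_eq {V ι : Type*} [Finite V] {A : ι → Set V}
    (hA : Pairwise (Disjoint on A)) {k m : ℕ} (hrest : (⋃ i, A i)ᶜ.ncard ≤ k * m) :
    ∃ c : V → ι ⊕ Fin m,
      (∀ i, c ⁻¹' {.inl i} = A i) ∧ ∀ j, (c ⁻¹' {.inr j}).ncard ≤ k := by
  classical
  obtain ⟨g, hg⟩ := exists_map_fin_ncard_preimage_le (B := ↥(⋃ i, A i)ᶜ) hrest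
  let c : V → ι ⊕ Fin m := fun v =>
    if h : ∃ i, v ∈ A i then .inl h.choose else .inr (g ⟨v, by simpa using h⟩)
  refine ⟨c, fun i => ?_, fun j => ?_⟩
  · ext v
    by_cases h : ∃ i, v ∈ A i
    · simp only [c, h, dif_pos, Set.mem_preimage, Set.mem_singleton_iff, Sum.inl.injEq]
      exact ⟨fun hi => hi ▸ h.choose_spec,
        fun hv => hA.eq (Set.not_disjoint_iff.mpr ⟨v, h.choose_spec, hv⟩)⟩
    · simp only [c, h, dif_neg, not_false_eq_true, Set.mem_preimage, Set.mem_singleton_iff,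
        reduceCtorEq, false_iff]
      exact fun hv => h ⟨i, hv⟩
  · have hfiber : c ⁻¹' {.inr j} = Subtype.val '' (g ⁻¹' {j}) := by
      ext v
      by_cases h : ∃ i, v ∈ A i
      · simp [c, h]
      · simp only [c, h, dite_false, Set.mem_preimage, Set.mem_singleton_iff, Sum.inr.injEq,
          Set.mem_image, Subtype.exists, Set.mem_compl_iff, Set.mem_iUnion, exists_and_right,
          exists_eq_right]
        exact ⟨fun hj => ⟨not_false, hj⟩, fun ⟨_, hj⟩ => hj⟩
    rw [hfiber, Set.ncard_image_of_injective _ Subtype.val_injective]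
    exact hg j

theorem stmt17_general {V : Type*} [Fintype V] (k n ℓ : ℕ)
    (G : SimpleGraph V) (hcard : Fintype.card V = k*(n-1)+1+ℓ)
    (hℓn : ℓ + 1 ≤ n - 1)
    (harith : (k+1)*(ℓ+1) + k*(n-2-ℓ) = k*(n-1)+1+ℓ)
    (A : Fin (ℓ+1) → Set V)
    (hdisj : Pairwise fun i j => Disjoint (A i) (A j))
    (hcardA : ∀ i, (A i).ncard = k + 1)
    (hdeg : ∀ i, ∀ v ∈ A i, ∃ u ∈ A i, Gᶜ.Adj v u) :
    ¬ Arrows G (_root_.starGraph k) (⊤ : SimpleGraph (Fin n)) := by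
  have hunion : (⋃ i, A i).ncard = (k + 1) * (ℓ + 1) := by
    rw [Set.ncard_iUnion_of_finite (fun _ => Set.toFinite _) hdisj]
    simp [hcardA, finsum_eq_sum_of_fintype, mul_comm]
  have hrest : (⋃ i, A i)ᶜ.ncard ≤ k * (n - 2 - ℓ) := by
    rw [Set.ncard_compl, hunion, Nat.card_eq_fintype_card, hcard]
    omega
  obtain ⟨c, hinl, hinr⟩ := exists_sum_map_preimage_inl_eq hdisj hrest
  refine not_arrows_starGraph_top_of_withinFibers c ?_ fun v => ?_
  · simp only [Fintype.card_sum, Fintype.card_fin]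
    omega
  rcases hcv : c v with i | j
  · have hvA : v ∈ A i := hinl i ▸ hcv
    obtain ⟨u, huA, hvu, hnadj⟩ := hdeg i v hvA
    have hcu : c u = c v := by
      rw [hcv, ← Set.mem_singleton_iff, ← Set.mem_preimage, hinl]
      exact huA
    exact ncard_neighborSet_withinFibers_lt_of_not_adj (by rw [hcv, hinl, hcardA]) hcu
      (Ne.symm hvu) hnadj
  · exact ncard_neighborSet_withinFibers_lt v (by rw [hcv]; exact hinr j)

theorem stmt17 {V : Type*} [Fintype V] (k n ℓ : ℕ) (hk : 2 ≤ k) (hn : 3 ≤ n)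
    (G : SimpleGraph V) (hcard : Fintype.card V = k*(n-1)+1+ℓ)
    (hℓn : ℓ + 1 ≤ n - 1)
    (harith : (k+1)*(ℓ+1) + k*(n-2-ℓ) = k*(n-1)+1+ℓ)
    (A : Fin (ℓ+1) → Set V)
    (hdisj : Pairwise fun i j => Disjoint (A i) (A j))
    (hcardA : ∀ i, (A i).ncard = k + 1)
    (hdeg : ∀ i, ∀ v ∈ A i, ∃ u ∈ A i, Gᶜ.Adj v u) :
    ¬ Arrows G (_root_.starGraph k) (⊤ : SimpleGraph (Fin n)) :=
  stmt17_general k n ℓ G hcard hℓn harith A hdisj hcardA hdeg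
end
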